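/- arXiv:2502.16639 — 2 statements merged into one kernel-verified Lean document; each statement's English description precedes it below -/
import Mathlib

section
/- Let n > m > 1 be real. Define for A > 0: E_2^{nm}(A) = (nm/(n−m))·(1/2^5)·[ (2^{2+n}−1)(1+n)ζ(n+2)/(2A)^n − (2^{2+m}−1)(1+m)ζ(m+2)/(2A)^m ] and E_4^{nm}(A) = (nm/(3(n−m)))·(1/2^{11})·[ (2^{4+n}−1)(1+n)(2+n)(3+n)ζ(n+4)/(2A)^n − (2^{4+m}−1)(1+m)(2+m)(3+m)ζ(m+4)/(2A)^m ] − (1/6)·E_2^{nm}(A). Then there is no A > 0 with E_2^{nm}(A) = 0 and E_4^{nm}(A) = 0 simultaneously; consequently the 1D (n,m) Lennard-Jones model has no tricritical point and all its equidistant-to-bipartite phase transitions are of second order. -/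
open Real Filter

/-- The Riemann zeta function `ζ(s) = Σ_{j=1}^∞ j^{-s}` for real `s > 1`. -/
noncomputable def rzeta (s : ℝ) : ℝ := ∑' j : ℕ, ((j : ℝ) + 1) ^ (-s)

/-- The coefficient `E₂^{nm}(A)` of `ε²` in the expansion of the bipartite energy of the
1D Lennard-Jones model around the equidistant configuration. -/
noncomputable def E2 (n m A : ℝ) : ℝ :=
  (n * m / (n - m)) * (1 / 2 ^ 5) *
    ((2 ^ (2 + n) - 1) * (1 + n) * rzeta (n + 2) / (2 * A) ^ n -
      (2 ^ (2 + m) - 1) * (1 + m) * rzeta (m + 2) / (2 * A) ^ m)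

/-- The coefficient `E₄^{nm}(A)` of `ε⁴` in the expansion of the bipartite energy of the
1D Lennard-Jones model around the equidistant configuration. -/
noncomputable def E4 (n m A : ℝ) : ℝ :=
  (n * m / (3 * (n - m))) * (1 / 2 ^ 11) *
    ((2 ^ (4 + n) - 1) * (1 + n) * (2 + n) * (3 + n) * rzeta (n + 4) / (2 * A) ^ n -
      (2 ^ (4 + m) - 1) * (1 + m) * (2 + m) * (3 + m) * rzeta (m + 4) / (2 * A) ^ m) -
    (1 / 6) * E2 n m A

/-!
Clearing denominators, `E₂ = 0` and `E₄ = 0` force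
`(2+n)(3+n) F(n+4) / F(n+2) = (2+m)(3+m) F(m+4) / F(m+2)`, where
`F(s) = (2^s - 1) ζ(s) = Σ_k (2/(2k+1))^s`. A power sum `Σ_k a_k^s` is log-convex in `s`
(Chebyshev's sum inequality for the similarly ordered sequences `a_k^c` and `a_k^2`), so
`F(s+4) / F(s+2)` is nondecreasing, while `(2+s)(3+s)` is strictly increasing: the two sides
differ whenever `m < n`.
-/

theorem Monovary.tsum_mul_tsum_le_tsum_mul_tsum {ι : Type*} {w f g : ι → ℝ}
    (hfg : Monovary f g) (hw : ∀ i, 0 ≤ w i) (hw_sum : Summable w)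
    (hwf : Summable fun i => w i * f i) (hwg : Summable fun i => w i * g i)
    (hwfg : Summable fun i => w i * (f i * g i)) :
    (∑' i, w i * f i) * ∑' i, w i * g i ≤ (∑' i, w i) * ∑' i, w i * (f i * g i) := by
  have hS₁ := summable_mul_of_summable_norm hwf.norm hwg.norm
  have hS₂ := summable_mul_of_summable_norm hw_sum.norm hwfg.norm
  rw [tsum_mul_tsum_of_summable_norm hwf.norm hwg.norm,
    tsum_mul_tsum_of_summable_norm hw_sum.norm hwfg.norm, ← sub_nonneg,
    ← hS₂.tsum_sub hS₁]
  set T : ι × ι → ℝ := fun z =>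
    w z.1 * (w z.2 * (f z.2 * g z.2)) - w z.1 * f z.1 * (w z.2 * g z.2)
  have hT : Summable T := hS₂.sub hS₁
  have hT_swap : ∀ z : ι × ι,
      T z + T z.swap = w z.1 * w z.2 * ((f z.1 - f z.2) * (g z.1 - g z.2)) := by
    intro z; simp only [T, Prod.fst_swap, Prod.snd_swap]; ring
  have hsum : ∑' z, (T z + T z.swap) = 2 * ∑' z, T z := by
    rw [hT.tsum_add hT.prod_symm, two_mul]
    exact congrArg _ ((Equiv.prodComm ι ι).tsum_eq T)
  have hnonneg : 0 ≤ ∑' z, (T z + T z.swap) := tsum_nonneg fun z => by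
    rw [hT_swap]
    exact mul_nonneg (mul_nonneg (hw _) (hw _)) (hfg.sub_mul_sub_nonneg _ _)
  linarith

theorem tsum_rpow_mul_tsum_rpow_le {ι : Type*} {a : ι → ℝ} (ha : ∀ i, 0 < a i) {p c d : ℝ}
    (hc : 0 ≤ c) (hd : 0 ≤ d) (hp : Summable fun i => a i ^ p)
    (hpc : Summable fun i => a i ^ (p + c)) (hpd : Summable fun i => a i ^ (p + d))
    (hpcd : Summable fun i => a i ^ (p + c + d)) :
    (∑' i, a i ^ (p + c)) * ∑' i, a i ^ (p + d)
      ≤ (∑' i, a i ^ p) * ∑' i, a i ^ (p + c + d) := by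
  have hmono : Monovary (fun i => a i ^ c) fun i => a i ^ d := fun i j hij =>
    rpow_le_rpow (ha i).le (le_of_not_ge fun hji => (rpow_le_rpow (ha j).le hji hd).not_gt hij) hc
  simp only [rpow_add (ha _)] at hpc hpd hpcd ⊢
  simp only [mul_assoc] at hpcd ⊢
  exact hmono.tsum_mul_tsum_le_tsum_mul_tsum (fun i => (rpow_pos_of_pos (ha i) p).le)
    hp hpc hpd hpcd

theorem summable_rzeta_terms {s : ℝ} (hs : 1 < s) :
    Summable fun j : ℕ => ((j : ℝ) + 1) ^ (-s) := by
  have := (summable_nat_add_iff 1).2 (summable_nat_rpow.2 (neg_lt_neg hs))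
  exact_mod_cast this

theorem rzeta_pos {s : ℝ} (hs : 1 < s) : 0 < rzeta s :=
  (summable_rzeta_terms hs).tsum_pos (fun j => by positivity) 0 (by positivity)

/-- `(2 ^ s - 1) ζ(s) = 2 ^ s λ(s)`, with `λ` the Dirichlet lambda function. -/
noncomputable def scaledOddZeta (s : ℝ) : ℝ := (2 ^ s - 1) * rzeta s

theorem scaledOddZeta_pos {s : ℝ} (hs : 1 < s) : 0 < scaledOddZeta s :=
  mul_pos (sub_pos.2 (one_lt_rpow one_lt_two (by linarith))) (rzeta_pos hs)

theorem summable_two_div_rpow {s : ℝ} (hs : 1 < s) :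
    Summable fun j : ℕ => (2 / ((j : ℝ) + 1)) ^ s := by
  refine ((summable_rzeta_terms hs).mul_left (2 ^ s)).congr fun j => ?_
  rw [div_rpow zero_le_two (by positivity), rpow_neg (by positivity), div_eq_mul_inv]

theorem summable_two_div_odd_rpow {s : ℝ} (hs : 1 < s) :
    Summable fun k : ℕ => (2 / (2 * (k : ℝ) + 1)) ^ s := by
  have := (summable_two_div_rpow hs).comp_injective (mul_right_injective₀ two_ne_zero)
  exact_mod_cast this

theorem scaledOddZeta_eq_tsum {s : ℝ} (hs : 1 < s) :
    scaledOddZeta s = ∑' k : ℕ, (2 / (2 * (k : ℝ) + 1)) ^ s := by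
  have h_odd : ∀ k : ℕ, (2 / (((2 * k + 1 : ℕ) : ℝ) + 1)) ^ s = ((k : ℝ) + 1) ^ (-s) :=
      fun k => by
    have : (2 : ℝ) / (((2 * k + 1 : ℕ) : ℝ) + 1) = ((k : ℝ) + 1)⁻¹ := by
      push_cast; field_simp; ring
    rw [this, inv_rpow (by positivity), rpow_neg (by positivity)]
  have h_split := tsum_even_add_odd (f := fun j : ℕ => (2 / ((j : ℝ) + 1)) ^ s)
    (by exact_mod_cast summable_two_div_odd_rpow hs)
    ((summable_rzeta_terms hs).congr fun k => (h_odd k).symm)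
  have h_all : ∑' j : ℕ, (2 / ((j : ℝ) + 1)) ^ s = 2 ^ s * rzeta s := by
    rw [rzeta, ← tsum_mul_left]
    refine tsum_congr fun j => ?_
    rw [div_rpow zero_le_two (by positivity), rpow_neg (by positivity), div_eq_mul_inv]
  simp only [h_odd, h_all] at h_split
  push_cast at h_split
  rw [scaledOddZeta, sub_one_mul, ← h_split]
  exact add_sub_cancel_right _ _

theorem scaledOddZeta_mul_le {p c d : ℝ} (hp : 1 < p) (hc : 0 ≤ c) (hd : 0 ≤ d) :
    scaledOddZeta (p + c) * scaledOddZeta (p + d)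
      ≤ scaledOddZeta p * scaledOddZeta (p + c + d) := by
  rw [scaledOddZeta_eq_tsum hp, scaledOddZeta_eq_tsum (by linarith),
    scaledOddZeta_eq_tsum (by linarith), scaledOddZeta_eq_tsum (by linarith)]
  exact tsum_rpow_mul_tsum_rpow_le (fun k => by positivity) hc hd (summable_two_div_odd_rpow hp)
    (summable_two_div_odd_rpow (by linarith)) (summable_two_div_odd_rpow (by linarith))
    (summable_two_div_odd_rpow (by linarith))

theorem mul_scaledOddZeta_lt {m n : ℝ} (hm : -1 < m) (hmn : m < n) :
    (2 + m) * (3 + m) * scaledOddZeta (m + 4) * scaledOddZeta (n + 2)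
      < (2 + n) * (3 + n) * scaledOddZeta (n + 4) * scaledOddZeta (m + 2) := by
  have hlog := scaledOddZeta_mul_le (p := m + 2) (c := n - m) (d := 2) (by linarith) (by linarith)
    zero_le_two
  rw [show m + 2 + (n - m) = n + 2 by ring, show m + 2 + 2 = m + 4 by ring,
    show n + 2 + 2 = n + 4 by ring] at hlog
  have hpos : 0 < scaledOddZeta (n + 4) * scaledOddZeta (m + 2) :=
    mul_pos (scaledOddZeta_pos (by linarith)) (scaledOddZeta_pos (by linarith))
  calc (2 + m) * (3 + m) * scaledOddZeta (m + 4) * scaledOddZeta (n + 2)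
      ≤ (2 + m) * (3 + m) * (scaledOddZeta (n + 4) * scaledOddZeta (m + 2)) := by
        rw [mul_assoc, mul_comm (scaledOddZeta _)]
        exact mul_le_mul_of_nonneg_left (by linarith) (by nlinarith)
    _ < (2 + n) * (3 + n) * (scaledOddZeta (n + 4) * scaledOddZeta (m + 2)) :=
        mul_lt_mul_of_pos_right (by nlinarith) hpos
    _ = _ := by ring

theorem mul_sub_div_eq_zero_iff {c x y P Q : ℝ} (hc : c ≠ 0) (hP : P ≠ 0) (hQ : Q ≠ 0) :
    c * (x / P - y / Q) = 0 ↔ x * Q = y * P := by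
  rw [mul_eq_zero, or_iff_right hc, sub_eq_zero, div_eq_div_iff hP hQ]

theorem E2_eq_zero_iff {n m A : ℝ} (hn : n ≠ 0) (hm : m ≠ 0) (hnm : n ≠ m) (hA : 0 < A) :
    E2 n m A = 0 ↔ (1 + n) * scaledOddZeta (n + 2) * (2 * A) ^ m
      = (1 + m) * scaledOddZeta (m + 2) * (2 * A) ^ n := by
  rw [E2, mul_sub_div_eq_zero_iff (by simp [hn, hm, sub_ne_zero.2 hnm])
    (by positivity) (by positivity), scaledOddZeta, scaledOddZeta, add_comm n, add_comm m]
  constructor <;> intro h <;> linear_combination h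

theorem E4_eq_zero_iff {n m A : ℝ} (hn : n ≠ 0) (hm : m ≠ 0) (hnm : n ≠ m) (hA : 0 < A)
    (h2 : E2 n m A = 0) : E4 n m A = 0 ↔
    (1 + n) * ((2 + n) * (3 + n)) * scaledOddZeta (n + 4) * (2 * A) ^ m
      = (1 + m) * ((2 + m) * (3 + m)) * scaledOddZeta (m + 4) * (2 * A) ^ n := by
  rw [E4, h2, mul_zero, sub_zero, mul_sub_div_eq_zero_iff (by simp [hn, hm, sub_ne_zero.2 hnm])
    (by positivity) (by positivity), scaledOddZeta, scaledOddZeta, add_comm n, add_comm m]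
  constructor <;> intro h <;> linear_combination h

/-- For `n > m > 1`, there is no `A > 0` with `E₂^{nm}(A) = 0` and
`E₄^{nm}(A) = 0` simultaneously; hence the 1D `(n,m)` Lennard-Jones model has no
tricritical point and all its equidistant-to-bipartite transitions are of second order. -/
theorem no_tricritical_point
    (n m : ℝ) (hm : 1 < m) (hnm : m < n) :
    ¬ ∃ A : ℝ, 0 < A ∧ E2 n m A = 0 ∧ E4 n m A = 0 := by
  rintro ⟨A, hA, h2, h4⟩
  have hn : 0 < n := by linarith
  have hm₀ : 0 < m := by linarith
  have e2 := (E2_eq_zero_iff hn.ne' hm₀.ne' hnm.ne' hA).1 h2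
  have e4 := (E4_eq_zero_iff hn.ne' hm₀.ne' hnm.ne' hA h2).1 h4
  have hlt := mul_scaledOddZeta_lt (by linarith) hnm
  have hpos : 0 < (1 + n) * (1 + m) * (2 * A) ^ m *
      ((2 + n) * (3 + n) * scaledOddZeta (n + 4) * scaledOddZeta (m + 2)
        - (2 + m) * (3 + m) * scaledOddZeta (m + 4) * scaledOddZeta (n + 2)) :=
    mul_pos (by positivity) (sub_pos.2 hlt)
  -- `e2` and `e4` prescribe the same ratio `(2A)^n / (2A)^m`; eliminating it kills the bracket
  exact hpos.ne' (by
    linear_combination (1 + m) * scaledOddZeta (m + 2) * e4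
      - (1 + m) * ((2 + m) * (3 + m)) * scaledOddZeta (m + 4) * e2)
end

section
/- Let n > m > 1 be real and A₀ > 0, and suppose Δ : (A₀,∞) → (1,∞) satisfies for every A > A₀ the stationarity equation A^{m−n} = 2^{n−m}·[ ζ(m+1, 1−δ(A)) − ζ(m+1, δ(A)) ] / [ ζ(n+1, 1−δ(A)) − ζ(n+1, δ(A)) ], where δ(A) = 1/(1+Δ(A)). Then δ(A) → 0 as A → ∞, and Δ(A) = 2A − 1 + o(1) as A → ∞, i.e. lim_{A→∞} ( Δ(A) − 2A + 1 ) = 0, regardless of the values of the Lennard-Jones parameters (n,m). -/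
open Real Filter

/-- The Hurwitz zeta function `ζ(s,q) = Σ_{j=0}^∞ (j+q)^{-s}` for real `s > 1`, `q > 0`. -/
noncomputable def hzeta (s q : ℝ) : ℝ := ∑' j : ℕ, ((j : ℝ) + q) ^ (-s)

open Asymptotics Set Topology

/-!
Put `M_s(δ) = δ^s (ζ(s,δ) − ζ(s,1−δ))`. In terms of `M`, the stationarity equation reads
`(2Aδ)^{n−m} = M_{n+1}(δ) / M_{m+1}(δ)`. Splitting off the first term of each series gives
`1 − (2δ)^s ≤ M_s(δ) ≤ 1` for `δ ≤ 1/2`, so `M_s(δ) = 1 + o(δ)` as `δ → 0⁺` when `s > 1`. Comparing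
the two series term by term (Bernoulli's inequality) gives `s M_t(δ) ≤ t M_s(δ)` for `s ≤ t`, so
`2Aδ` stays bounded and `δ → 0`. Hence `2Aδ = 1 + o(δ)`, that is `1/δ − 2A = Δ + 1 − 2A → 0`.
-/

theorem div_mul_one_sub_rpow_le {v s t : ℝ} (hv0 : 0 ≤ v) (hs : 0 < s) (hst : s ≤ t) :
    s / t * (1 - v ^ t) ≤ 1 - v ^ s := by
  have ht : 0 < t := hs.trans_le hst
  have hvt : v ^ s = (1 + (v ^ t - 1)) ^ (s / t) := by
    rw [add_sub_cancel, ← rpow_mul hv0, mul_div_cancel₀ _ ht.ne']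
  have := rpow_one_add_le_one_add_mul_self (by linarith [rpow_nonneg hv0 t] : -1 ≤ v ^ t - 1)
    (div_pos hs ht).le ((div_le_one ht).mpr hst)
  rw [← hvt] at this
  linarith

theorem div_mul_rpow_mul_sub_le {d x y s t : ℝ} (hd : 0 < d) (hdx : d ≤ x) (hxy : x ≤ y)
    (hs : 0 < s) (hst : s ≤ t) :
    s / t * (d ^ t * (x ^ (-t) - y ^ (-t))) ≤ d ^ s * (x ^ (-s) - y ^ (-s)) := by
  have hx : 0 < x := hd.trans_le hdx
  have hy : 0 < y := hx.trans_le hxy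
  have hfactor : ∀ r : ℝ, d ^ r * (x ^ (-r) - y ^ (-r)) = (d / x) ^ r * (1 - (x / y) ^ r) := by
    intro r
    rw [div_rpow hd.le hx.le, div_rpow hx.le hy.le, rpow_neg hx.le, rpow_neg hy.le]
    field_simp
  have hdx1 : (d / x) ^ t ≤ (d / x) ^ s :=
    rpow_le_rpow_of_exponent_ge (by positivity) ((div_le_one hx).mpr hdx) hst
  have hxy1 : 0 ≤ 1 - (x / y) ^ t := by
    linarith [rpow_le_one (by positivity : 0 ≤ x / y) ((div_le_one hy).mpr hxy) (hs.le.trans hst)]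
  have hkey := div_mul_one_sub_rpow_le (by positivity : 0 ≤ x / y) hs hst
  have hst0 : 0 ≤ s / t := div_nonneg hs.le (hs.le.trans hst)
  rw [hfactor, hfactor]
  calc s / t * ((d / x) ^ t * (1 - (x / y) ^ t))
      ≤ s / t * ((d / x) ^ s * (1 - (x / y) ^ t)) := by gcongr
    _ = (d / x) ^ s * (s / t * (1 - (x / y) ^ t)) := by ring
    _ ≤ (d / x) ^ s * (1 - (x / y) ^ s) := by gcongr

theorem rpow_isLittleO_id_nhdsGT_zero {s : ℝ} (hs : 1 < s) :
    (fun d : ℝ => d ^ s) =o[𝓝[>] 0] id := by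
  rw [isLittleO_iff_tendsto fun d hd => by
    simp [show d = 0 from hd, zero_rpow (by linarith : s ≠ 0)]]
  have hlim : Tendsto (fun d : ℝ => d ^ (s - 1)) (𝓝[>] 0) (𝓝 0) := by
    have := (continuousAt_rpow_const 0 (s - 1) (Or.inr (by linarith))).tendsto
    rw [zero_rpow (by linarith)] at this
    exact this.mono_left nhdsWithin_le_nhds
  refine hlim.congr' ?_
  filter_upwards [self_mem_nhdsWithin] with d (hd : 0 < d)
  rw [id, rpow_sub_one hd.ne']

theorem Asymptotics.IsLittleO.rpow_sub_one {α : Type*} {l : Filter α} {f g : α → ℝ}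
    (h : (fun x => f x - 1) =o[l] g) (hg : Tendsto g l (𝓝 0)) (p : ℝ) :
    (fun x => f x ^ p - 1) =o[l] g := by
  have hf : Tendsto f l (𝓝 1) := tendsto_sub_nhds_zero_iff.mp (h.trans_tendsto hg)
  have hderiv := hasDerivAt_rpow_const (x := 1) (p := p) (Or.inl one_ne_zero)
  simpa only [one_rpow, Function.comp_def] using
    (hderiv.isBigO_sub.comp_tendsto hf).trans_isLittleO h

theorem tendsto_nhdsGT_zero_of_mul_le {f : ℝ → ℝ} {C : ℝ} (hpos : ∀ᶠ x in atTop, 0 < f x)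
    (hle : ∀ᶠ x in atTop, x * f x ≤ C) : Tendsto f atTop (𝓝[>] 0) := by
  have hbound : ∀ᶠ x in atTop, f x ≤ C * x⁻¹ := by
    filter_upwards [hle, eventually_gt_atTop 0] with x hx hx0
    rwa [← div_eq_mul_inv, le_div_iff₀ hx0, mul_comm]
  have hlim : Tendsto (fun x : ℝ => C * x⁻¹) atTop (𝓝 0) := by
    simpa using tendsto_inv_atTop_zero.const_mul C
  exact tendsto_nhdsWithin_iff.mpr
    ⟨squeeze_zero' (hpos.mono fun _ => le_of_lt) hbound hlim, hpos⟩

theorem tendsto_inv_sub_of_isLittleO {α : Type*} {l : Filter α} {f g : α → ℝ}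
    (h : (fun x => f x * g x - 1) =o[l] g) (hg : ∀ᶠ x in l, g x ≠ 0) :
    Tendsto (fun x => (g x)⁻¹ - f x) l (𝓝 0) := by
  have := h.tendsto_div_nhds_zero.neg
  rw [neg_zero] at this
  refine this.congr' ?_
  filter_upwards [hg] with x hx
  field_simp
  ring

theorem one_div_one_add_mem_Ioo {x : ℝ} (hx : 1 < x) : 1 / (1 + x) ∈ Ioo 0 (1 / 2) :=
  ⟨by positivity, by rw [div_lt_div_iff₀ (by linarith) two_pos]; linarith⟩

theorem summable_nat_add_rpow_neg {s q : ℝ} (hs : 1 < s) (hq : 0 < q) :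
    Summable fun j : ℕ => ((j : ℝ) + q) ^ (-s) := by
  refine ((summable_one_div_nat_add_rpow q s).mpr hs).congr fun j => ?_
  have hj : (0 : ℝ) < j + q := by positivity
  rw [abs_of_pos hj, rpow_neg hj.le, one_div]

theorem hzeta_le_hzeta_of_le {s q q' : ℝ} (hs : 1 < s) (hq : 0 < q) (hqq' : q ≤ q') :
    hzeta s q' ≤ hzeta s q :=
  (summable_nat_add_rpow_neg hs (hq.trans_le hqq')).tsum_le_tsum
    (fun _ => rpow_le_rpow_of_nonpos (by positivity) (by linarith) (by linarith))
    (summable_nat_add_rpow_neg hs hq)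

theorem hzeta_eq_rpow_neg_add {s q : ℝ} (hs : 1 < s) (hq : 0 < q) :
    hzeta s q = q ^ (-s) + hzeta s (q + 1) := by
  rw [hzeta, (summable_nat_add_rpow_neg hs hq).tsum_eq_zero_add, hzeta]
  push_cast
  simp_rw [zero_add, add_assoc, add_comm (1 : ℝ) q]

noncomputable def scaledHzetaDiff (s d : ℝ) : ℝ := d ^ s * (hzeta s d - hzeta s (1 - d))

section ScaledHzetaDiff

variable {s t d : ℝ}

theorem hasSum_scaledHzetaDiff (hs : 1 < s) (hd : 0 < d) (hd1 : d < 1) :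
    HasSum (fun j : ℕ => d ^ s * ((j + d) ^ (-s) - (j + (1 - d)) ^ (-s)))
      (scaledHzetaDiff s d) :=
  ((summable_nat_add_rpow_neg hs hd).hasSum.sub
    (summable_nat_add_rpow_neg hs (by linarith)).hasSum).mul_left _

theorem scaledHzetaDiff_le_one (hs : 1 < s) (hd : 0 < d) (hd1 : d < 1) :
    scaledHzetaDiff s d ≤ 1 := by
  have hsplit := hzeta_eq_rpow_neg_add hs hd
  have hle := hzeta_le_hzeta_of_le hs (by linarith : 0 < 1 - d) (by linarith : 1 - d ≤ d + 1)
  have hinv : d ^ s * d ^ (-s) = 1 := by rw [rpow_neg hd.le, mul_inv_cancel₀ (by positivity)]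
  have hpos : 0 < d ^ s := by positivity
  rw [scaledHzetaDiff, hsplit]
  nlinarith

theorem one_sub_two_mul_rpow_le_scaledHzetaDiff (hs : 1 < s) (hd : 0 < d) (hd2 : d ≤ 1 / 2) :
    1 - (2 * d) ^ s ≤ scaledHzetaDiff s d := by
  have hsplit := hzeta_eq_rpow_neg_add hs hd
  have hsplit' := hzeta_eq_rpow_neg_add hs (by linarith : 0 < 1 - d)
  have hle := hzeta_le_hzeta_of_le hs (by linarith : 0 < d + 1) (by linarith : d + 1 ≤ 1 - d + 1)
  have hinv : d ^ s * d ^ (-s) = 1 := by rw [rpow_neg hd.le, mul_inv_cancel₀ (by positivity)]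
  have hhalf : (1 - d) ^ (-s) ≤ 2 ^ s := by
    calc (1 - d) ^ (-s) ≤ (1 / 2) ^ (-s) :=
          rpow_le_rpow_of_nonpos (by norm_num) (by linarith) (by linarith)
      _ = 2 ^ s := by rw [one_div, inv_rpow (by norm_num), rpow_neg (by norm_num), inv_inv]
  have hpos : 0 < d ^ s := by positivity
  rw [scaledHzetaDiff, hsplit, hsplit', mul_rpow (by norm_num) hd.le]
  nlinarith

theorem scaledHzetaDiff_pos (hs : 1 < s) (hd : 0 < d) (hd2 : d < 1 / 2) :
    0 < scaledHzetaDiff s d := by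
  have : (2 * d) ^ s < 1 := rpow_lt_one (by positivity) (by linarith) (by linarith)
  linarith [one_sub_two_mul_rpow_le_scaledHzetaDiff hs hd hd2.le]

theorem div_mul_scaledHzetaDiff_le (hs : 1 < s) (hst : s ≤ t) (hd : 0 < d) (hd2 : d ≤ 1 / 2) :
    s / t * scaledHzetaDiff t d ≤ scaledHzetaDiff s d :=
  hasSum_le (fun j => div_mul_rpow_mul_sub_le hd (by linarith [j.cast_nonneg (α := ℝ)])
      (by linarith) (by linarith) hst)
    ((hasSum_scaledHzetaDiff (hs.trans_le hst) hd (by linarith)).mul_left _)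
    (hasSum_scaledHzetaDiff hs hd (by linarith))

theorem scaledHzetaDiff_div_le (hs : 1 < s) (hst : s ≤ t) (hd : 0 < d) (hd2 : d < 1 / 2) :
    scaledHzetaDiff t d / scaledHzetaDiff s d ≤ t / s := by
  have := div_mul_scaledHzetaDiff_le hs hst hd hd2.le
  rw [div_le_div_iff₀ (scaledHzetaDiff_pos hs hd hd2) (by linarith)]
  rw [div_mul_eq_mul_div, div_le_iff₀ (by linarith)] at this
  linarith

theorem scaledHzetaDiff_div_rpow_le (hs : 1 < s) (hst : s ≤ t) (hd : 0 < d) (hd2 : d < 1 / 2)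
    {p : ℝ} (hp : 0 ≤ p) :
    (scaledHzetaDiff t d / scaledHzetaDiff s d) ^ p ≤ (t / s) ^ p :=
  rpow_le_rpow (div_pos (scaledHzetaDiff_pos (hs.trans_le hst) hd hd2)
    (scaledHzetaDiff_pos hs hd hd2)).le (scaledHzetaDiff_div_le hs hst hd hd2) hp

theorem scaledHzetaDiff_sub_one_isLittleO (hs : 1 < s) :
    (fun d => scaledHzetaDiff s d - 1) =o[𝓝[>] 0] id := by
  refine IsBigO.trans_isLittleO (IsBigO.of_bound (2 ^ s) ?_) (rpow_isLittleO_id_nhdsGT_zero hs)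
  filter_upwards [Ioo_mem_nhdsGT (by norm_num : (0 : ℝ) < 1 / 2)] with d ⟨hd, hd2⟩
  have hle := scaledHzetaDiff_le_one hs hd (by linarith)
  have hge := one_sub_two_mul_rpow_le_scaledHzetaDiff hs hd hd2.le
  rw [mul_rpow (by norm_num) hd.le] at hge
  rw [norm_eq_abs, norm_eq_abs, abs_of_pos (by positivity : 0 < d ^ s), abs_le]
  constructor <;> linarith

theorem scaledHzetaDiff_div_sub_one_isLittleO (hs : 1 < s) (ht : 1 < t) :
    (fun d => scaledHzetaDiff t d / scaledHzetaDiff s d - 1) =o[𝓝[>] 0] id := by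
  have hS := scaledHzetaDiff_sub_one_isLittleO hs
  have hlim : Tendsto (fun d => (scaledHzetaDiff s d)⁻¹) (𝓝[>] 0) (𝓝 1) := by
    simpa using ((tendsto_sub_nhds_zero_iff.mp
      (hS.trans_tendsto (tendsto_nhdsWithin_of_tendsto_nhds tendsto_id))).inv₀ one_ne_zero)
  refine ((scaledHzetaDiff_sub_one_isLittleO ht).sub hS).mul_isBigO (hlim.isBigO_one ℝ)
    |>.congr' ?_ (.of_forall fun _ => mul_one _)
  filter_upwards [Ioo_mem_nhdsGT (by norm_num : (0 : ℝ) < 1 / 2)] with d ⟨hd, hd2⟩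
  field_simp [(scaledHzetaDiff_pos hs hd hd2).ne']
  ring

end ScaledHzetaDiff

theorem two_mul_mul_eq_of_stationary {n m A d : ℝ} (hm : 0 < m) (hnm : m < n) (hA : 0 < A)
    (hd : 0 < d) (hd2 : d < 1 / 2)
    (heq : A ^ (m - n) = 2 ^ (n - m) * (hzeta (m + 1) (1 - d) - hzeta (m + 1) d) /
      (hzeta (n + 1) (1 - d) - hzeta (n + 1) d)) :
    2 * A * d = (scaledHzetaDiff (n + 1) d / scaledHzetaDiff (m + 1) d) ^ (n - m)⁻¹ := by
  have hdiff_pos : ∀ s, 1 < s → 0 < hzeta s d - hzeta s (1 - d) := fun s hs =>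
    pos_of_mul_pos_right (scaledHzetaDiff_pos hs hd hd2) (by positivity)
  have hNm := hdiff_pos (m + 1) (by linarith)
  have hNn := hdiff_pos (n + 1) (by linarith)
  have hAinv : A ^ (m - n) = (A ^ (n - m))⁻¹ := by rw [← rpow_neg hA.le, neg_sub]
  have hdsplit : d ^ (n + 1) = d ^ (n - m) * d ^ (m + 1) := by
    rw [← rpow_add hd]; ring_nf
  have hpow : (2 * A * d) ^ (n - m) = 2 ^ (n - m) * A ^ (n - m) * d ^ (n - m) := by
    rw [mul_rpow (by positivity) hd.le, mul_rpow (by norm_num) hA.le]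
  have hratio : (2 * A * d) ^ (n - m) = scaledHzetaDiff (n + 1) d / scaledHzetaDiff (m + 1) d := by
    rw [hAinv, eq_div_iff (by linarith), ← neg_sub (hzeta (m + 1) d),
      ← neg_sub (hzeta (n + 1) d)] at heq
    rw [scaledHzetaDiff, scaledHzetaDiff, hpow, hdsplit, eq_div_iff (by positivity)]
    have : 0 < A ^ (n - m) := by positivity
    field_simp at heq
    linear_combination d ^ (n - m) * d ^ (m + 1) * heq
  rw [← hratio, rpow_rpow_inv (by positivity) (by linarith)]

/-- For `n > m > 1`, if `Δ : (A₀,∞) → (1,∞)` satisfies for all `A > A₀` the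
stationarity equation
`A^{m−n} = 2^{n−m}·[ζ(m+1,1−δ(A)) − ζ(m+1,δ(A))]/[ζ(n+1,1−δ(A)) − ζ(n+1,δ(A))]` with
`δ(A) = 1/(1+Δ(A))`, then `δ(A) → 0` and `Δ(A) = 2A − 1 + o(1)` as `A → ∞`, i.e.
`Δ(A) − 2A + 1 → 0`, regardless of the Lennard-Jones parameters `(n,m)`. -/
theorem bipartite_parameter_asymptotics
    (n m A₀ : ℝ) (hm : 1 < m) (hnm : m < n) (hA₀ : 0 < A₀)
    (Δ : ℝ → ℝ) (hΔ : ∀ A : ℝ, A₀ < A → 1 < Δ A)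
    (heq : ∀ A : ℝ, A₀ < A →
      A ^ (m - n) = 2 ^ (n - m) *
        (hzeta (m + 1) (1 - 1 / (1 + Δ A)) - hzeta (m + 1) (1 / (1 + Δ A))) /
        (hzeta (n + 1) (1 - 1 / (1 + Δ A)) - hzeta (n + 1) (1 / (1 + Δ A)))) :
    Tendsto (fun A : ℝ => 1 / (1 + Δ A)) atTop (nhds 0) ∧
    Tendsto (fun A : ℝ => Δ A - 2 * A + 1) atTop (nhds 0) := by
  set δ : ℝ → ℝ := fun A => 1 / (1 + Δ A) with hδ
  set φ : ℝ → ℝ := fun d =>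
    (scaledHzetaDiff (n + 1) d / scaledHzetaDiff (m + 1) d) ^ (n - m)⁻¹
  have hδ_mem : ∀ A, A₀ < A → δ A ∈ Ioo 0 (1 / 2) := fun A hA =>
    one_div_one_add_mem_Ioo (hΔ A hA)
  have hδφ : ∀ A, A₀ < A → 2 * A * δ A = φ (δ A) := fun A hA =>
    two_mul_mul_eq_of_stationary (by linarith) hnm (hA₀.trans hA) (hδ_mem A hA).1
      (hδ_mem A hA).2 (heq A hA)
  have hδ_tendsto : Tendsto δ atTop (𝓝[>] 0) := by
    refine tendsto_nhdsGT_zero_of_mul_le (C := ((n + 1) / (m + 1)) ^ (n - m)⁻¹ / 2) ?_ ?_ <;>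
      filter_upwards [eventually_gt_atTop A₀] with A hA
    · exact (hδ_mem A hA).1
    · have hbound := scaledHzetaDiff_div_rpow_le (s := m + 1) (t := n + 1) (by linarith)
        (by linarith) (hδ_mem A hA).1 (hδ_mem A hA).2 (inv_nonneg.mpr (by linarith : 0 ≤ n - m))
      linarith [hδφ A hA]
  have hφ_sub : (fun d => φ d - 1) =o[𝓝[>] 0] id :=
    (scaledHzetaDiff_div_sub_one_isLittleO (by linarith) (by linarith)).rpow_sub_one
      (tendsto_nhdsWithin_of_tendsto_nhds tendsto_id) _
  have hlin : (fun A => 2 * A * δ A - 1) =o[atTop] δ :=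
    (hφ_sub.comp_tendsto hδ_tendsto).congr'
      (by filter_upwards [eventually_gt_atTop A₀] with A hA; simp [hδφ A hA]) .rfl
  refine ⟨tendsto_nhds_of_tendsto_nhdsWithin hδ_tendsto,
    (tendsto_inv_sub_of_isLittleO hlin ?_).congr' ?_⟩ <;>
    filter_upwards [eventually_gt_atTop A₀] with A hA
  · exact (hδ_mem A hA).1.ne'
  · simp only [hδ, one_div, inv_inv]
    ring
end
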